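/- Let V be a real vector space with a seminorm structure given by three nonnegative quantities a(v), b(v), c(v) (representing the broken gradient norm, the weighted average-flux norm, and the weighted jump norm), and suppose b(v)^2 ≤ C₁ a(v)^2 for all v (a discrete trace/inverse estimate with C₁ > 0). Define the bilinear-form lower bound: if A(v,v) = a(v)^2 - (1+δ) s(v) + α c(v)^2 where |s(v)| ≤ ε C₁ a(v)^2 + (1/(4ε)) c(v)^2 for every ε > 0, then for any 0 < C < 1 and any α ≥ (1+δ)²C₁ / (4(1-C)²), one has A(v,v) ≥ C (a(v)^2 + α c(v)^2) ≥ (C/(1+C₁)) (a(v)^2 + b(v)^2 + α c(v)^2). -/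

import Mathlib

/-! The cross term is bounded by Young's inequality with the weight `ε = (1 - C) / (|1 + δ| C₁)`,
which turns it into `(1 - C) a² + (1 + δ)² C₁ / (4 (1 - C)) c²`; the lower bound on `α` makes the
second summand at most `(1 - C) α c²`. The trace estimate `b² ≤ C₁ a²` then gives
`a² + b² + α c² ≤ (1 + C₁) (a² + α c²)`. -/

lemma mul_le_of_forall_abs_le_young {k s p q t : ℝ} (hp : 0 ≤ p) (ht : 0 < t)
    (hs : ∀ ε > 0, |s| ≤ ε * p + 1 / (4 * ε) * q) :
    k * s ≤ t * p + k ^ 2 / (4 * t) * q := by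
  rcases eq_or_ne k 0 with rfl | hk
  · simpa using mul_nonneg ht.le hp
  have hk' : 0 < |k| := abs_pos.mpr hk
  calc k * s ≤ |k| * |s| := (le_abs_self _).trans (abs_mul k s).le
    _ ≤ |k| * (t / |k| * p + 1 / (4 * (t / |k|)) * q) :=
        mul_le_mul_of_nonneg_left (hs _ (div_pos ht hk')) hk'.le
    _ = t * p + k ^ 2 / (4 * t) * q := by
        rw [← sq_abs k]; field_simp

lemma mul_add_le_sub_mul_add_of_young {a c s k α C₁ C : ℝ} (hC₁ : 0 < C₁) (hC1 : C < 1)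
    (hs : ∀ ε > 0, |s| ≤ ε * C₁ * a ^ 2 + 1 / (4 * ε) * c ^ 2)
    (hα : k ^ 2 * C₁ / (4 * (1 - C) ^ 2) ≤ α) :
    C * (a ^ 2 + α * c ^ 2) ≤ a ^ 2 - k * s + α * c ^ 2 := by
  have hC' : 0 < 1 - C := sub_pos.mpr hC1
  have hyoung : k * s ≤ (1 - C) / C₁ * (C₁ * a ^ 2) + k ^ 2 / (4 * ((1 - C) / C₁)) * c ^ 2 :=
    mul_le_of_forall_abs_le_young (by positivity) (by positivity) fun ε hε => by
      simpa only [mul_assoc] using hs ε hε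
  have hcross : k ^ 2 / (4 * ((1 - C) / C₁)) ≤ (1 - C) * α := by
    calc k ^ 2 / (4 * ((1 - C) / C₁)) = (1 - C) * (k ^ 2 * C₁ / (4 * (1 - C) ^ 2)) := by
          field_simp
      _ ≤ (1 - C) * α := mul_le_mul_of_nonneg_left hα hC'.le
  have hleading : (1 - C) / C₁ * (C₁ * a ^ 2) = (1 - C) * a ^ 2 := by field_simp
  linarith [mul_le_mul_of_nonneg_right hcross (sq_nonneg c)]

lemma div_one_add_mul_le_mul {a b c α C₁ C : ℝ} (hC₁ : 0 ≤ C₁) (hα : 0 ≤ α) (hC : 0 ≤ C)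
    (htrace : b ^ 2 ≤ C₁ * a ^ 2) :
    C / (1 + C₁) * (a ^ 2 + b ^ 2 + α * c ^ 2) ≤ C * (a ^ 2 + α * c ^ 2) := by
  have hsum : a ^ 2 + b ^ 2 + α * c ^ 2 ≤ (1 + C₁) * (a ^ 2 + α * c ^ 2) := by
    linarith [mul_nonneg hC₁ (mul_nonneg hα (sq_nonneg c))]
  rw [div_mul_eq_mul_div, div_le_iff₀ (by positivity)]
  linarith [mul_le_mul_of_nonneg_left hsum hC]

theorem ipdg_coercivity_general {V : Type*}
    (a b c s Avv : V → ℝ) (C₁ δ α C : ℝ)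
    (hC₁ : 0 < C₁) (hα : 0 < α)
    (htrace : ∀ v, (b v) ^ 2 ≤ C₁ * (a v) ^ 2)
    (hs : ∀ v, ∀ ε > (0 : ℝ), |s v| ≤ ε * C₁ * (a v) ^ 2 + (1 / (4 * ε)) * (c v) ^ 2)
    (hA : ∀ v, Avv v = (a v) ^ 2 - (1 + δ) * s v + α * (c v) ^ 2)
    (hC : 0 < C) (hC1 : C < 1)
    (hαbig : (1 + δ) ^ 2 * C₁ / (4 * (1 - C) ^ 2) ≤ α) :
    ∀ v, C * ((a v) ^ 2 + α * (c v) ^ 2) ≤ Avv v ∧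
      (C / (1 + C₁)) * ((a v) ^ 2 + (b v) ^ 2 + α * (c v) ^ 2)
        ≤ C * ((a v) ^ 2 + α * (c v) ^ 2) := fun v =>
  ⟨(hA v).symm ▸ mul_add_le_sub_mul_add_of_young hC₁ hC1 (hs v) hαbig,
    div_one_add_mul_le_mul hC₁.le hα.le hC.le (htrace v)⟩

/-- Coercivity lower bound for the IPDG bilinear form, in abstract seminorm form. -/
theorem ipdg_coercivity {V : Type*} [AddCommGroup V] [Module ℝ V]
    (a b c s Avv : V → ℝ) (C₁ δ α C : ℝ)
    (hC₁ : 0 < C₁) (hα : 0 < α)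
    (hδ : δ = -1 ∨ δ = 0 ∨ δ = 1)
    (ha : ∀ v, 0 ≤ a v) (hb : ∀ v, 0 ≤ b v) (hc : ∀ v, 0 ≤ c v)
    (htrace : ∀ v, (b v) ^ 2 ≤ C₁ * (a v) ^ 2)
    (hs : ∀ v, ∀ ε > (0 : ℝ), |s v| ≤ ε * C₁ * (a v) ^ 2 + (1 / (4 * ε)) * (c v) ^ 2)
    (hA : ∀ v, Avv v = (a v) ^ 2 - (1 + δ) * s v + α * (c v) ^ 2)
    (hC : 0 < C) (hC1 : C < 1)
    (hαbig : (1 + δ) ^ 2 * C₁ / (4 * (1 - C) ^ 2) ≤ α) :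
    ∀ v, C * ((a v) ^ 2 + α * (c v) ^ 2) ≤ Avv v ∧
      (C / (1 + C₁)) * ((a v) ^ 2 + (b v) ^ 2 + α * (c v) ^ 2)
        ≤ C * ((a v) ^ 2 + α * (c v) ^ 2) :=
  ipdg_coercivity_general a b c s Avv C₁ δ α C hC₁ hα htrace hs hA hC hC1 hαbig
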